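/- arXiv:math-ph/9906001 — 3 statements merged into one kernel-verified Lean document; each statement's English description precedes it below -/
import Mathlib

section
/- Let n ∈ ℕ, let ξ : ℝ × ℝⁿ × ℝⁿ → ℝⁿ be smooth, and let K^i_λ : ℝ^(1+n) × ℝ^(1+n) → ℝ (for i = 1,…,n and λ = 0,1,…,n) be smooth functions satisfying ξ^i(t,q,v) = K^i_0((t,q),(1,v)) + Σ_{j=1}^n v^j K^i_j((t,q),(1,v)) for all (t,q,v). Then a smooth curve c : ℝ → ℝⁿ satisfies c''(t) = ξ(t, c(t), c'(t)) for all t if and only if the curve γ : ℝ → ℝ^(1+n), γ(t) = (t, c(t)), satisfies the geodesic equations γ̈⁰(t) = 0, γ̇⁰(t) = 1, and γ̈^i(t) = Σ_{λ=0}^n K^i_λ(γ(t), γ̇(t)) · γ̇^λ(t) for all t and all i = 1,…,n. -/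
/-!
Along the graph `γ t = (t, c t)` one has `γ̇ = (1, ċ)` and `γ̈ = (0, c̈)`. Hence the temporal
equations hold automatically, and since `γ̇⁰ = 1` the compatibility condition turns
`Σ_λ K^i_λ(γ, γ̇) γ̇^λ` into `ξ^i(t, c, ċ)`, so the spatial geodesic equations are exactly
`c̈ = ξ(t, c, ċ)`.
-/

section FinCons

variable {𝕜 : Type*} [NontriviallyNormedField 𝕜] {n : ℕ} {F : Fin (n + 1) → Type*}
  [∀ i, NormedAddCommGroup (F i)] [∀ i, NormedSpace 𝕜 (F i)]

theorem deriv_finCons {f : 𝕜 → F 0} {g : 𝕜 → ∀ i, F (Fin.succ i)} (hf : Differentiable 𝕜 f)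
    (hg : Differentiable 𝕜 g) :
    deriv (fun x => Fin.cons (f x) (g x)) = fun x => Fin.cons (deriv f x) (deriv g x) :=
  funext fun x => ((hf x).hasDerivAt.finCons (hg x).hasDerivAt).deriv

end FinCons

theorem sum_mul_cons_one {R : Type*} [CommSemiring R] {n : ℕ} (a : Fin (n + 1) → R)
    (v : Fin n → R) :
    ∑ l, a l * (Fin.cons 1 v : Fin (n + 1) → R) l = a 0 + ∑ j, v j * a j.succ := by
  simp [Fin.sum_univ_succ, mul_comm]

theorem geodesic_form_of_dynamic_equation_general (n : ℕ)
    (ξ : ℝ → (Fin n → ℝ) → (Fin n → ℝ) → Fin n → ℝ)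
    (K : Fin n → Fin (n + 1) → (Fin (n + 1) → ℝ) → (Fin (n + 1) → ℝ) → ℝ)
    (hcompat : ∀ (t : ℝ) (q v : Fin n → ℝ) (i : Fin n),
      ξ t q v i = K i 0 (Fin.cons t q) (Fin.cons 1 v)
        + ∑ j : Fin n, v j * K i j.succ (Fin.cons t q) (Fin.cons 1 v))
    (c : ℝ → Fin n → ℝ) (hc : ContDiff ℝ (⊤ : ℕ∞) c)
    (γ : ℝ → Fin (n + 1) → ℝ) (hγ : ∀ t, γ t = Fin.cons t (c t)) :
    (∀ t, deriv (deriv c) t = ξ t (c t) (deriv c t)) ↔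
      (∀ t, deriv (deriv γ) t 0 = 0 ∧ deriv γ t 0 = 1 ∧
        ∀ i : Fin n, deriv (deriv γ) t i.succ =
          ∑ lam : Fin (n + 1), K i lam (γ t) (deriv γ t) * deriv γ t lam) := by
  obtain rfl : γ = fun t => (Fin.cons t (c t) : Fin (n + 1) → ℝ) := funext hγ
  have hc' : Differentiable ℝ c := hc.differentiable (by simp)
  have hc'' : Differentiable ℝ (deriv c) :=
    (contDiff_infty_iff_deriv.mp hc).2.differentiable (by simp)
  have hvel : deriv (fun t => (Fin.cons t (c t) : Fin (n + 1) → ℝ)) =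
      fun t => Fin.cons 1 (deriv c t) := by
    simpa using deriv_finCons (F := fun _ => ℝ) differentiable_id hc'
  have hacc : deriv (fun t => (Fin.cons 1 (deriv c t) : Fin (n + 1) → ℝ)) =
      fun t => Fin.cons 0 (deriv (deriv c) t) := by
    simpa using deriv_finCons (F := fun _ => ℝ) (differentiable_const 1) hc''
  simp only [hvel, hacc, sum_mul_cons_one, ← hcompat, Fin.cons_zero, Fin.cons_succ, true_and,
    funext_iff]

/-- Any second order dynamic equation `c'' = ξ(t, c, c')` on the
configuration bundle `ℝ × ℝⁿ → ℝ` is equivalent to the geodesic equation on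
`ℝ^(1+n)` for a connection `K` with vanishing temporal components satisfying
`ξ^i = K^i_0 + Σ_j v^j K^i_j` along `q̇⁰ = 1, q̇ = v`. -/
theorem geodesic_form_of_dynamic_equation (n : ℕ)
    (ξ : ℝ → (Fin n → ℝ) → (Fin n → ℝ) → Fin n → ℝ)
    (hξ : ContDiff ℝ (⊤ : ℕ∞)
      fun p : ℝ × (Fin n → ℝ) × (Fin n → ℝ) => ξ p.1 p.2.1 p.2.2)
    (K : Fin n → Fin (n + 1) → (Fin (n + 1) → ℝ) → (Fin (n + 1) → ℝ) → ℝ)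
    (hK : ∀ (i : Fin n) (lam : Fin (n + 1)), ContDiff ℝ (⊤ : ℕ∞)
      fun p : (Fin (n + 1) → ℝ) × (Fin (n + 1) → ℝ) => K i lam p.1 p.2)
    (hcompat : ∀ (t : ℝ) (q v : Fin n → ℝ) (i : Fin n),
      ξ t q v i = K i 0 (Fin.cons t q) (Fin.cons 1 v)
        + ∑ j : Fin n, v j * K i j.succ (Fin.cons t q) (Fin.cons 1 v))
    (c : ℝ → Fin n → ℝ) (hc : ContDiff ℝ (⊤ : ℕ∞) c)
    (γ : ℝ → Fin (n + 1) → ℝ) (hγ : ∀ t, γ t = Fin.cons t (c t)) :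
    (∀ t, deriv (deriv c) t = ξ t (c t) (deriv c t)) ↔
      (∀ t, deriv (deriv γ) t 0 = 0 ∧ deriv γ t 0 = 1 ∧
        ∀ i : Fin n, deriv (deriv γ) t i.succ =
          ∑ lam : Fin (n + 1), K i lam (γ t) (deriv γ t) * deriv γ t lam) :=
  geodesic_form_of_dynamic_equation_general n ξ K hcompat c hc γ hγ
end

section
/- Let ξ : ℝ × ℝⁿ × ℝⁿ → ℝⁿ be smooth and let K^i_λ : ℝ^(1+n) × ℝ^(1+n) → ℝ be smooth connection components with vanishing temporal part satisfying ξ^i(t,q,v) = K^i_0((t,q),(1,v)) + Σ_j v^j K^i_j((t,q),(1,v)). Let s : ℝ^(1+n) → ℝ and h^i_λ : ℝ^(1+n) → ℝ be arbitrary smooth functions, and define the soldering form σ with components σ⁰_λ = 0, σ^i_k(q, q̇) = h^i_k(q) + (s(q) − 1) h^i_k(q) q̇⁰, and σ^i_0(q, q̇) = −s(q) Σ_k h^i_k(q) q̇^k − h^i_0(q) q̇⁰ + h^i_0(q). Then the modified connection K' = K + σ, with components K'^i_λ(q,q̇) = K^i_λ(q,q̇) + σ^i_λ(q,q̇), also satisfies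 K'^i_0((t,q),(1,v)) + Σ_j v^j K'^i_j((t,q),(1,v)) = ξ^i(t,q,v) for all (t,q,v); consequently a smooth curve c : ℝ → ℝⁿ satisfies c'' = ξ(t, c, c') if and only if γ(t) = (t, c(t)) satisfies γ̈⁰ = 0, γ̇⁰ = 1 and γ̈^i = Σ_λ K'^i_λ(γ, γ̇) γ̇^λ. -/
/-!
Contracted with a velocity `w`, the soldering form gives
`σ^i_λ(w) w^λ = (1 - w⁰) h^i_λ w^λ`: the terms carrying `s` cancel, and what is left vanishes on
the slice `w⁰ = 1` of velocities of curves parametrised by time. There `K` and `K + σ` therefore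
have the same contraction `K^i_λ(q, (1, v)) (1, v)^λ`, which is the dynamic equation. The graph
`γ t = (t, c t)` of a curve has `γ̇ = (1, ċ)` and `γ̈ = (0, c̈)`, so the geodesic equation of a
connection along `γ` is exactly its dynamic equation along `c`.
-/

theorem sum_mul_finCons_one {R : Type*} [CommSemiring R] {n : ℕ} (f : Fin (n + 1) → R)
    (v : Fin n → R) :
    ∑ lam, f lam * (Fin.cons 1 v : Fin (n + 1) → R) lam = f 0 + ∑ j, v j * f j.succ := by
  simp only [Fin.sum_univ_succ, Fin.cons_zero, Fin.cons_succ, one_mul, mul_comm (f _)]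

section Connection

variable {R : Type*} [CommRing R] {n : ℕ}

theorem solderingForm_contract (s : R) (h σ w : Fin (n + 1) → R)
    (hσk : ∀ k : Fin n, σ k.succ = h k.succ + (s - 1) * h k.succ * w 0)
    (hσ0 : σ 0 = -s * (∑ k : Fin n, h k.succ * w k.succ) - h 0 * w 0 + h 0) :
    ∑ lam, σ lam * w lam = (1 - w 0) * ∑ lam, h lam * w lam := by
  have spatial : ∑ k : Fin n, σ k.succ * w k.succ
      = (1 + (s - 1) * w 0) * ∑ k : Fin n, h k.succ * w k.succ := by
    rw [Finset.mul_sum]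
    exact Finset.sum_congr rfl fun k _ => by rw [hσk]; ring
  rw [Fin.sum_univ_succ, Fin.sum_univ_succ, spatial, hσ0]
  ring

def dynamicEquation (K : Fin n → Fin (n + 1) → (Fin (n + 1) → R) → (Fin (n + 1) → R) → R)
    (t : R) (q v : Fin n → R) (i : Fin n) : R :=
  ∑ lam, K i lam (Fin.cons t q) (Fin.cons 1 v) * (Fin.cons 1 v : Fin (n + 1) → R) lam

theorem dynamicEquation_apply
    (K : Fin n → Fin (n + 1) → (Fin (n + 1) → R) → (Fin (n + 1) → R) → R)
    (t : R) (q v : Fin n → R) (i : Fin n) :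
    dynamicEquation K t q v i
      = K i 0 (Fin.cons t q) (Fin.cons 1 v)
        + ∑ j, v j * K i j.succ (Fin.cons t q) (Fin.cons 1 v) :=
  sum_mul_finCons_one _ v

theorem dynamicEquation_add_solderingForm
    (K σ K' : Fin n → Fin (n + 1) → (Fin (n + 1) → R) → (Fin (n + 1) → R) → R)
    (s : (Fin (n + 1) → R) → R) (h : Fin n → Fin (n + 1) → (Fin (n + 1) → R) → R)
    (hσk : ∀ (i k : Fin n) (q q' : Fin (n + 1) → R),
      σ i k.succ q q' = h i k.succ q + (s q - 1) * h i k.succ q * q' 0)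
    (hσ0 : ∀ (i : Fin n) (q q' : Fin (n + 1) → R),
      σ i 0 q q' = -(s q) * (∑ k : Fin n, h i k.succ q * q' k.succ)
        - h i 0 q * q' 0 + h i 0 q)
    (hK' : ∀ (i : Fin n) (lam : Fin (n + 1)) (q q' : Fin (n + 1) → R),
      K' i lam q q' = K i lam q q' + σ i lam q q') :
    dynamicEquation K' = dynamicEquation K := by
  funext t q v i
  have σ_contract := solderingForm_contract (s (Fin.cons t q)) (h i · (Fin.cons t q))
    (σ i · (Fin.cons t q) (Fin.cons 1 v)) (Fin.cons 1 v) (fun k => hσk i k _ _) (hσ0 i _ _)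
  rw [Fin.cons_zero, sub_self, zero_mul] at σ_contract
  simp only [dynamicEquation, hK', add_mul, Finset.sum_add_distrib, σ_contract, add_zero]

end Connection

section Graph

variable {𝕜 : Type*} [NontriviallyNormedField 𝕜] {n : ℕ} {c : 𝕜 → Fin n → 𝕜}

theorem deriv_finCons_self (hc : Differentiable 𝕜 c) :
    deriv (fun t => (Fin.cons t (c t) : Fin (n + 1) → 𝕜)) = fun t => Fin.cons 1 (deriv c t) :=
  funext fun t => ((hasDerivAt_id t).finCons (hc t).hasDerivAt).deriv

theorem deriv_deriv_finCons_self (hc : Differentiable 𝕜 c) (hc' : Differentiable 𝕜 (deriv c)) :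
    deriv (deriv fun t => (Fin.cons t (c t) : Fin (n + 1) → 𝕜))
      = fun t => Fin.cons 0 (deriv (deriv c) t) := by
  rw [deriv_finCons_self hc]
  exact funext fun t => ((hasDerivAt_const t 1).finCons (hc' t).hasDerivAt).deriv

theorem solves_dynamicEquation_iff_graph_geodesic
    (K : Fin n → Fin (n + 1) → (Fin (n + 1) → 𝕜) → (Fin (n + 1) → 𝕜) → 𝕜)
    (hc : Differentiable 𝕜 c) (hc' : Differentiable 𝕜 (deriv c)) :
    let γ : 𝕜 → Fin (n + 1) → 𝕜 := fun t => Fin.cons t (c t)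
    (∀ t, deriv (deriv c) t = dynamicEquation K t (c t) (deriv c t)) ↔
      ∀ t, deriv (deriv γ) t 0 = 0 ∧ deriv γ t 0 = 1 ∧
        ∀ i : Fin n, deriv (deriv γ) t i.succ =
          ∑ lam : Fin (n + 1), K i lam (γ t) (deriv γ t) * deriv γ t lam := by
  simp only [deriv_deriv_finCons_self hc hc']
  simp only [deriv_finCons_self hc, Fin.cons_zero, Fin.cons_succ, true_and, funext_iff,
    dynamicEquation]

end Graph

theorem soldering_form_preserves_dynamic_equation_general (n : ℕ)
    (ξ : ℝ → (Fin n → ℝ) → (Fin n → ℝ) → Fin n → ℝ)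
    (K : Fin n → Fin (n + 1) → (Fin (n + 1) → ℝ) → (Fin (n + 1) → ℝ) → ℝ)
    (hcompat : ∀ (t : ℝ) (q v : Fin n → ℝ) (i : Fin n),
      ξ t q v i = K i 0 (Fin.cons t q) (Fin.cons 1 v)
        + ∑ j : Fin n, v j * K i j.succ (Fin.cons t q) (Fin.cons 1 v))
    (s : (Fin (n + 1) → ℝ) → ℝ)
    (h : Fin n → Fin (n + 1) → (Fin (n + 1) → ℝ) → ℝ)
    (σ : Fin n → Fin (n + 1) → (Fin (n + 1) → ℝ) → (Fin (n + 1) → ℝ) → ℝ)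
    (hσk : ∀ (i k : Fin n) (q q' : Fin (n + 1) → ℝ),
      σ i k.succ q q' = h i k.succ q + (s q - 1) * h i k.succ q * q' 0)
    (hσ0 : ∀ (i : Fin n) (q q' : Fin (n + 1) → ℝ),
      σ i 0 q q' = -(s q) * (∑ k : Fin n, h i k.succ q * q' k.succ)
        - h i 0 q * q' 0 + h i 0 q)
    (K' : Fin n → Fin (n + 1) → (Fin (n + 1) → ℝ) → (Fin (n + 1) → ℝ) → ℝ)
    (hK' : ∀ (i : Fin n) (lam : Fin (n + 1)) (q q' : Fin (n + 1) → ℝ),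
      K' i lam q q' = K i lam q q' + σ i lam q q') :
    (∀ (t : ℝ) (q v : Fin n → ℝ) (i : Fin n),
      K' i 0 (Fin.cons t q) (Fin.cons 1 v)
        + ∑ j : Fin n, v j * K' i j.succ (Fin.cons t q) (Fin.cons 1 v) = ξ t q v i) ∧
    (∀ (c : ℝ → Fin n → ℝ), ContDiff ℝ (⊤ : ℕ∞) c →
      ∀ (γ : ℝ → Fin (n + 1) → ℝ), (∀ t, γ t = Fin.cons t (c t)) →
      ((∀ t, deriv (deriv c) t = ξ t (c t) (deriv c t)) ↔
        (∀ t, deriv (deriv γ) t 0 = 0 ∧ deriv γ t 0 = 1 ∧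
          ∀ i : Fin n, deriv (deriv γ) t i.succ =
            ∑ lam : Fin (n + 1), K' i lam (γ t) (deriv γ t) * deriv γ t lam))) := by
  have K_represents : dynamicEquation K = ξ := by
    funext t q v i
    rw [dynamicEquation_apply, hcompat]
  have K'_represents : dynamicEquation K' = ξ := by
    rw [dynamicEquation_add_solderingForm K σ K' s h hσk hσ0 hK', K_represents]
  refine ⟨fun t q v i => by rw [← dynamicEquation_apply, K'_represents], ?_⟩
  intro c hc γ hγ
  obtain rfl : γ = fun t => (Fin.cons t (c t) : Fin (n + 1) → ℝ) := funext hγ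
  rw [← K'_represents]
  exact solves_dynamicEquation_iff_graph_geodesic K' (hc.differentiable (by simp))
    ((contDiff_infty_iff_deriv.mp hc).2.differentiable (by simp))

/-- modifying a connection (with vanishing temporal components)
representing a dynamic equation `ξ` by the soldering form `σ` with
`σ⁰_λ = 0`, `σ^i_k = h^i_k + (s − 1) h^i_k q̇⁰`,
`σ^i_0 = −s h^i_k q̇^k − h^i_0 q̇⁰ + h^i_0`
yields another connection representing the same dynamic equation, hence the
same geodesic description of solutions. -/
theorem soldering_form_preserves_dynamic_equation (n : ℕ)
    (ξ : ℝ → (Fin n → ℝ) → (Fin n → ℝ) → Fin n → ℝ)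
    (hξ : ContDiff ℝ (⊤ : ℕ∞)
      fun p : ℝ × (Fin n → ℝ) × (Fin n → ℝ) => ξ p.1 p.2.1 p.2.2)
    (K : Fin n → Fin (n + 1) → (Fin (n + 1) → ℝ) → (Fin (n + 1) → ℝ) → ℝ)
    (hK : ∀ (i : Fin n) (lam : Fin (n + 1)), ContDiff ℝ (⊤ : ℕ∞)
      fun p : (Fin (n + 1) → ℝ) × (Fin (n + 1) → ℝ) => K i lam p.1 p.2)
    (hcompat : ∀ (t : ℝ) (q v : Fin n → ℝ) (i : Fin n),
      ξ t q v i = K i 0 (Fin.cons t q) (Fin.cons 1 v)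
        + ∑ j : Fin n, v j * K i j.succ (Fin.cons t q) (Fin.cons 1 v))
    (s : (Fin (n + 1) → ℝ) → ℝ) (hs : ContDiff ℝ (⊤ : ℕ∞) s)
    (h : Fin n → Fin (n + 1) → (Fin (n + 1) → ℝ) → ℝ)
    (hh : ∀ (i : Fin n) (lam : Fin (n + 1)), ContDiff ℝ (⊤ : ℕ∞) (h i lam))
    (σ : Fin n → Fin (n + 1) → (Fin (n + 1) → ℝ) → (Fin (n + 1) → ℝ) → ℝ)
    (hσk : ∀ (i k : Fin n) (q q' : Fin (n + 1) → ℝ),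
      σ i k.succ q q' = h i k.succ q + (s q - 1) * h i k.succ q * q' 0)
    (hσ0 : ∀ (i : Fin n) (q q' : Fin (n + 1) → ℝ),
      σ i 0 q q' = -(s q) * (∑ k : Fin n, h i k.succ q * q' k.succ)
        - h i 0 q * q' 0 + h i 0 q)
    (K' : Fin n → Fin (n + 1) → (Fin (n + 1) → ℝ) → (Fin (n + 1) → ℝ) → ℝ)
    (hK' : ∀ (i : Fin n) (lam : Fin (n + 1)) (q q' : Fin (n + 1) → ℝ),
      K' i lam q q' = K i lam q q' + σ i lam q q') :
    (∀ (t : ℝ) (q v : Fin n → ℝ) (i : Fin n),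
      K' i 0 (Fin.cons t q) (Fin.cons 1 v)
        + ∑ j : Fin n, v j * K' i j.succ (Fin.cons t q) (Fin.cons 1 v) = ξ t q v i) ∧
    (∀ (c : ℝ → Fin n → ℝ), ContDiff ℝ (⊤ : ℕ∞) c →
      ∀ (γ : ℝ → Fin (n + 1) → ℝ), (∀ t, γ t = Fin.cons t (c t)) →
      ((∀ t, deriv (deriv c) t = ξ t (c t) (deriv c t)) ↔
        (∀ t, deriv (deriv γ) t 0 = 0 ∧ deriv γ t 0 = 1 ∧
          ∀ i : Fin n, deriv (deriv γ) t i.succ =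
            ∑ lam : Fin (n + 1), K' i lam (γ t) (deriv γ t) * deriv γ t lam))) :=
  soldering_form_preserves_dynamic_equation_general n ξ K hcompat s h σ hσk hσ0 K' hK'
end

section
/- Let φ : ℝ × ℝⁿ → ℝⁿ be smooth such that for each t the map φ(t, ·) : ℝⁿ → ℝⁿ is a diffeomorphism, with jointly smooth inverse ψ : ℝ × ℝⁿ → ℝⁿ (so ψ(t, φ(t, x)) = x). Define Γ^i(t, q) := ∂_t φ^i(t, ψ(t, q)). Then a smooth curve c̄ : ℝ → ℝⁿ satisfies c̄''(t) = 0 for all t if and only if the curve c(t) := φ(t, c̄(t)) satisfies, for all t, c̈^i = ∂_t Γ^i(t,c) + Σ_j ċ^j ∂_j Γ^i(t,c) + Σ_j ∂_j Γ^i(t,c) (ċ^j − Γ^j(t,c)) − Σ_{m,j,k} (∂φ^i/∂x^m)(t, ψ(t,c)) · (∂²ψ^m/∂q^j∂q^k)(t,c) · (ċ^j − Γ^j(t,c))(ċ^k − Γ^k(t,c)), where the middle term d_tΓ^i = ∂_tΓ^i + Σ_j ċ^j ∂_jΓ^i. -/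
/-- Partial derivative of `f : ℝⁿ → ℝ` in the `j`-th coordinate direction. -/
noncomputable def pdir {n : ℕ} (f : (Fin n → ℝ) → ℝ) (v : Fin n → ℝ) (j : Fin n) : ℝ :=
  fderiv ℝ f v (Pi.single j 1)

/-!
Differentiating `c(t) = φ(t, c̄(t))` gives `ċ = Γ(t, c) + D_xφ · c̄'`, so `w = ċ - Γ(t, c)` is
the velocity relative to the frame. Differentiating once more, the mixed partial `∂_t D_xφ · c̄'`
becomes `D_qΓ · w` (differentiate `Γ(t, φ(t, x)) = ∂_tφ(t, x)` in `x` and use the symmetry of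
second derivatives), and `D_x²φ (c̄', c̄')` becomes `-D_xφ · D_q²ψ (w, w)` (differentiate
`ψ(t, φ(t, x)) = x` twice in `x`). Hence `c̈` equals the inertial force plus `D_xφ · c̄''`, and
`D_xφ` is injective, with left inverse `D_qψ`.
-/

open Function
open scoped ContDiff

theorem ContDiff.differentiable_fderiv {E F : Type*} [NormedAddCommGroup E] [NormedSpace ℝ E]
    [NormedAddCommGroup F] [NormedSpace ℝ F] {f : E → F} (hf : ContDiff ℝ 2 f) :
    Differentiable ℝ (fderiv ℝ f) :=
  (hf.fderiv_right (m := 1) le_rfl).differentiable one_ne_zero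

section TimeDependent

variable {E F : Type*} [NormedAddCommGroup E] [NormedSpace ℝ E]
  [NormedAddCommGroup F] [NormedSpace ℝ F] {f : ℝ → E → F}

theorem ContDiff.of_uncurry {n : ℕ∞ω} (hf : ContDiff ℝ n (uncurry f)) (t : ℝ) :
    ContDiff ℝ n (f t) :=
  hf.comp (contDiff_prodMk_right t)

theorem ContDiff.uncurry_fderiv {n : ℕ∞ω} (hf : ContDiff ℝ (n + 1) (uncurry f)) :
    ContDiff ℝ n (uncurry fun s => fderiv ℝ (f s)) :=
  ContDiff.fderiv (f := fun p : ℝ × E => f p.1) (hf.comp (contDiff_fst.fst.prodMk contDiff_snd))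
    contDiff_snd le_rfl

theorem deriv_eq_fderiv_uncurry_apply_one_zero {t : ℝ} {x : E}
    (hf : DifferentiableAt ℝ (uncurry f) (t, x)) :
    deriv (fun s => f s x) t = fderiv ℝ (uncurry f) (t, x) (1, 0) :=
  (hf.hasFDerivAt.comp_hasDerivAt_of_eq t ((hasDerivAt_id' t).prodMk (hasDerivAt_const t x))
    rfl).deriv

theorem fderiv_eq_fderiv_uncurry_comp_inr {t : ℝ} {x : E}
    (hf : DifferentiableAt ℝ (uncurry f) (t, x)) :
    fderiv ℝ (f t) x = (fderiv ℝ (uncurry f) (t, x)).comp (.inr ℝ ℝ E) :=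
  (hf.hasFDerivAt.comp x (hasFDerivAt_prodMk_right t x)).fderiv

theorem hasDerivAt_timeDependent_comp {γ : ℝ → E} {v : E} {t : ℝ}
    (hf : DifferentiableAt ℝ (uncurry f) (t, γ t)) (hγ : HasDerivAt γ v t) :
    HasDerivAt (fun s => f s (γ s)) (deriv (fun s => f s (γ t)) t + fderiv ℝ (f t) (γ t) v) t := by
  have h : HasDerivAt (fun s => f s (γ s)) (fderiv ℝ (uncurry f) (t, γ t) (1, v)) t :=
    hf.hasFDerivAt.comp_hasDerivAt_of_eq t ((hasDerivAt_id' t).prodMk hγ) rfl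
  convert h using 1
  rw [deriv_eq_fderiv_uncurry_apply_one_zero hf, fderiv_eq_fderiv_uncurry_comp_inr hf,
    ContinuousLinearMap.comp_apply, ← map_add]
  simp

theorem fderiv_deriv_comm (hf : ContDiff ℝ 2 (uncurry f)) (t : ℝ) (x u : E) :
    fderiv ℝ (fun y => deriv (fun s => f s y) t) x u = deriv (fun s => fderiv ℝ (f s) x) t u := by
  have hd : Differentiable ℝ (uncurry f) := hf.differentiable two_ne_zero
  have hD : Differentiable ℝ (fderiv ℝ (uncurry f)) := hf.differentiable_fderiv
  set D2 := fderiv ℝ (fderiv ℝ (uncurry f)) (t, x)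
  have hsymm : D2 (0, u) (1, 0) = D2 (1, 0) (0, u) :=
    (hf.contDiffAt.isSymmSndFDerivAt (by simp)) _ _
  have hL : HasFDerivAt (fun y => deriv (fun s => f s y) t)
      ((D2.flip (1, 0)).comp (.inr ℝ ℝ E)) x := by
    have h := ((hD (t, x)).hasFDerivAt.comp x (hasFDerivAt_prodMk_right t x)).clm_apply
      (hasFDerivAt_const ((1 : ℝ), (0 : E)) x)
    refine h.congr_of_eventuallyEq (.of_forall fun y => ?_) |>.congr_fderiv ?_
    · exact deriv_eq_fderiv_uncurry_apply_one_zero (hd _)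
    · ext v; simp [D2]
  have hR : HasDerivAt (fun s => fderiv ℝ (f s) x) ((D2 (1, 0)).comp (.inr ℝ ℝ E)) t := by
    have h := (hD (t, x)).hasFDerivAt.comp_hasDerivAt_of_eq t
      ((hasDerivAt_id' t).prodMk (hasDerivAt_const t x)) rfl
    refine (h.clm_comp (hasDerivAt_const t (.inr ℝ ℝ E))).congr_of_eventuallyEq
      (.of_forall fun s => ?_) |>.congr_deriv ?_
    · exact fderiv_eq_fderiv_uncurry_comp_inr (hd _)
    · ext v; simp [D2]
  rw [hL.fderiv, hR.deriv]
  simpa using hsymm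

end TimeDependent

section InverseMaps

variable {E F : Type*} [NormedAddCommGroup E] [NormedSpace ℝ E]
  [NormedAddCommGroup F] [NormedSpace ℝ F] {f : E → F} {g : F → E}

theorem leftInverse_fderiv_of_leftInverse (hgf : LeftInverse g f) {x : E}
    (hg : DifferentiableAt ℝ g (f x)) (hf : DifferentiableAt ℝ f x) :
    LeftInverse (fderiv ℝ g (f x)) (fderiv ℝ f x) := by
  intro v
  have h := (hg.hasFDerivAt.comp x hf.hasFDerivAt).fderiv
  rw [show g ∘ f = id from funext hgf, fderiv_id] at h
  exact (congrArg (· v) h).symm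

theorem fderiv_apply_fderiv_fderiv_of_leftInverse (hgf : LeftInverse g f) (hg : ContDiff ℝ 2 g)
    (hf : ContDiff ℝ 2 f) (x u v : E) :
    fderiv ℝ g (f x) (fderiv ℝ (fderiv ℝ f) x u v)
      = -fderiv ℝ (fderiv ℝ g) (f x) (fderiv ℝ f x u) (fderiv ℝ f x v) := by
  have hg1 : Differentiable ℝ g := hg.differentiable two_ne_zero
  have hf1 : Differentiable ℝ f := hf.differentiable two_ne_zero
  -- `D(g ∘ f) = id` is constant, so its derivative, computed by the product rule, vanishes.
  have hchain : (fun y => (fderiv ℝ g (f y)).comp (fderiv ℝ f y)) = fun _ => .id ℝ E := by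
    funext y
    ext w
    exact leftInverse_fderiv_of_leftInverse hgf (hg1 _) (hf1 y) w
  have h := ((hg.differentiable_fderiv (f x)).hasFDerivAt.comp x (hf1 x).hasFDerivAt).clm_comp
    (hf.differentiable_fderiv x).hasFDerivAt
  rw [show (fun y => (fderiv ℝ g ∘ f) y ∘L fderiv ℝ f y) = fun _ => .id ℝ E from hchain] at h
  have h0 := congrArg (fun L => L u v) ((hasFDerivAt_const _ x).unique h)
  simp only [zero_apply, comp_apply, add_apply, ContinuousLinearMap.comp_apply,
    ContinuousLinearMap.compL_apply, ContinuousLinearMap.flip_apply] at h0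
  exact eq_neg_of_add_eq_zero_left h0.symm

theorem fderiv_fderiv_apply_of_leftInverse_of_rightInverse (hgf : LeftInverse g f)
    (hfg : RightInverse g f) (hg : ContDiff ℝ 2 g) (hf : ContDiff ℝ 2 f) (x u v : E) :
    fderiv ℝ (fderiv ℝ f) x u v
      = -fderiv ℝ f x (fderiv ℝ (fderiv ℝ g) (f x) (fderiv ℝ f x u) (fderiv ℝ f x v)) := by
  have hinv := leftInverse_fderiv_of_leftInverse hfg (x := f x)
    (hf.differentiable two_ne_zero _) (hg.differentiable two_ne_zero _)
  rw [hgf x] at hinv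
  rw [← map_neg, ← fderiv_apply_fderiv_fderiv_of_leftInverse hgf hg hf, hinv]

end InverseMaps

section MovingFrame

variable {E : Type*} [NormedAddCommGroup E] [NormedSpace ℝ E] {φ ψ : ℝ → E → E}

noncomputable def frameConnection (φ ψ : ℝ → E → E) (t : ℝ) (q : E) : E :=
  deriv (fun s => φ s (ψ t q)) t

theorem frameConnection_apply_self (hinv : ∀ t x, ψ t (φ t x) = x) (t : ℝ) (x : E) :
    frameConnection φ ψ t (φ t x) = deriv (fun s => φ s x) t := by
  simp only [frameConnection, hinv]

theorem contDiff_frameConnection {n : ℕ∞ω} (hφ : ContDiff ℝ (n + 1) (uncurry φ))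
    (hψ : ContDiff ℝ n (uncurry ψ)) : ContDiff ℝ n (uncurry (frameConnection φ ψ)) := by
  have hφ1 : Differentiable ℝ (uncurry φ) := hφ.differentiable (by simp)
  have h : uncurry (frameConnection φ ψ)
      = fun p => fderiv ℝ (uncurry φ) (p.1, ψ p.1 p.2) (1, 0) := by
    funext p
    exact deriv_eq_fderiv_uncurry_apply_one_zero (hφ1 _)
  rw [h]
  exact ((hφ.fderiv_right le_rfl).comp (contDiff_fst.prodMk hψ)).clm_apply contDiff_const

theorem hasDerivAt_comp_frameConnection (hφ : Differentiable ℝ (uncurry φ))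
    (hinv : ∀ t x, ψ t (φ t x) = x) {γ : ℝ → E} {v : E} {t : ℝ} (hγ : HasDerivAt γ v t) :
    HasDerivAt (fun s => φ s (γ s))
      (frameConnection φ ψ t (φ t (γ t)) + fderiv ℝ (φ t) (γ t) v) t := by
  rw [frameConnection_apply_self hinv]
  exact hasDerivAt_timeDependent_comp (hφ _) hγ

theorem deriv_fderiv_apply_eq_fderiv_frameConnection (hφ : ContDiff ℝ 2 (uncurry φ))
    (hψ : ContDiff ℝ 1 (uncurry ψ)) (hinv : ∀ t x, ψ t (φ t x) = x) (t : ℝ) (x u : E) :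
    deriv (fun s => fderiv ℝ (φ s) x) t u
      = fderiv ℝ (frameConnection φ ψ t) (φ t x) (fderiv ℝ (φ t) x u) := by
  have hΓ : Differentiable ℝ (frameConnection φ ψ t) :=
    ((contDiff_frameConnection hφ hψ).of_uncurry t).differentiable one_ne_zero
  have hφt : Differentiable ℝ (φ t) := (hφ.of_uncurry t).differentiable two_ne_zero
  have h : (fun y => deriv (fun s => φ s y) t) = frameConnection φ ψ t ∘ φ t :=
    funext fun y => (frameConnection_apply_self hinv t y).symm
  rw [← fderiv_deriv_comm hφ, h, fderiv_comp x (hΓ _) (hφt x), ContinuousLinearMap.comp_apply]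

theorem deriv_deriv_comp_eq_frameConnection_add (hφ : ContDiff ℝ 2 (uncurry φ))
    (hψ : ContDiff ℝ 2 (uncurry ψ)) (hinv : ∀ t x, ψ t (φ t x) = x)
    (hinv' : ∀ t q, φ t (ψ t q) = q) {cb c : ℝ → E} (hcb : ContDiff ℝ 2 cb)
    (hc : ∀ t, c t = φ t (cb t)) (t : ℝ) :
    deriv (deriv c) t
      = deriv (fun s => frameConnection φ ψ s (c t)) t
        + fderiv ℝ (frameConnection φ ψ t) (c t) (deriv c t)
        + fderiv ℝ (frameConnection φ ψ t) (c t) (deriv c t - frameConnection φ ψ t (c t))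
        - fderiv ℝ (φ t) (cb t) (fderiv ℝ (fderiv ℝ (ψ t)) (c t)
            (deriv c t - frameConnection φ ψ t (c t)) (deriv c t - frameConnection φ ψ t (c t)))
        + fderiv ℝ (φ t) (cb t) (deriv (deriv cb) t) := by
  obtain rfl : c = fun s => φ s (cb s) := funext hc
  have hφ1 : Differentiable ℝ (uncurry φ) := hφ.differentiable two_ne_zero
  have hΓ : Differentiable ℝ (uncurry (frameConnection φ ψ)) :=
    (contDiff_frameConnection hφ (hψ.of_le one_le_two)).differentiable one_ne_zero
  have hDφ : Differentiable ℝ (uncurry fun s => fderiv ℝ (φ s)) :=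
    hφ.uncurry_fderiv.differentiable one_ne_zero
  have hcb1 : Differentiable ℝ cb := hcb.differentiable two_ne_zero
  have hcb2 : Differentiable ℝ (deriv cb) := hcb.deriv'.differentiable one_ne_zero
  have hc' : deriv (fun s => φ s (cb s))
      = fun s => frameConnection φ ψ s (φ s (cb s)) + fderiv ℝ (φ s) (cb s) (deriv cb s) :=
    funext fun s => (hasDerivAt_comp_frameConnection hφ1 hinv (hcb1 s).hasDerivAt).deriv
  have hΓc := hasDerivAt_timeDependent_comp (hΓ _)
    (hasDerivAt_comp_frameConnection hφ1 hinv (hcb1 t).hasDerivAt)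
  have hDφcb := (hasDerivAt_timeDependent_comp (hDφ _) (hcb1 t).hasDerivAt).clm_apply
    (hcb2 t).hasDerivAt
  rw [hc']
  beta_reduce
  rw [(hΓc.fun_add hDφcb).deriv, add_sub_cancel_left, add_apply,
    deriv_fderiv_apply_eq_fderiv_frameConnection hφ (hψ.of_le one_le_two) hinv,
    fderiv_fderiv_apply_of_leftInverse_of_rightInverse (hinv t) (hinv' t)
      (hψ.of_uncurry t) (hφ.of_uncurry t)]
  abel

end MovingFrame

section Coordinates

variable {n : ℕ} {E : Type*} [NormedAddCommGroup E] [NormedSpace ℝ E] {ι : Type*}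

theorem sum_mul_pdir (g : (Fin n → ℝ) → ℝ) (x v : Fin n → ℝ) :
    ∑ j, v j * pdir g x j = fderiv ℝ g x v := by
  conv_rhs => rw [pi_eq_sum_univ' v]
  simp [pdir]

theorem sum_pdir_mul (g : (Fin n → ℝ) → ℝ) (x v : Fin n → ℝ) :
    ∑ j, pdir g x j * v j = fderiv ℝ g x v := by
  simp_rw [mul_comm (pdir g x _)]
  exact sum_mul_pdir g x v

theorem fderiv_apply_apply {f : E → ι → ℝ} {x : E} (hf : DifferentiableAt ℝ f x) (i : ι)
    (v : E) : fderiv ℝ (fun q => f q i) x v = fderiv ℝ f x v i := by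
  rw [fderiv_apply hf]
  rfl

theorem fderiv_fderiv_apply_apply [Fintype ι] {f : E → ι → ℝ} (hf : ContDiff ℝ 2 f) (i : ι)
    (x u v : E) :
    fderiv ℝ (fderiv ℝ fun q => f q i) x u v = fderiv ℝ (fderiv ℝ f) x u v i := by
  have hf1 : Differentiable ℝ f := hf.differentiable two_ne_zero
  have h : fderiv ℝ (fun q => f q i) = fun q => (ContinuousLinearMap.proj i).comp (fderiv ℝ f q) :=
    funext fun q => fderiv_apply (hf1 q) i
  rw [h, ((hasFDerivAt_const (ContinuousLinearMap.proj i) x).clm_comp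
    (hf.differentiable_fderiv x).hasFDerivAt).fderiv]
  simp

theorem sum_sum_pdir_pdir_mul_mul {g : (Fin n → ℝ) → ℝ} (hg : ContDiff ℝ 2 g)
    (x v w : Fin n → ℝ) :
    ∑ j, ∑ k, pdir (fun q => pdir g q k) x j * v j * w k = fderiv ℝ (fderiv ℝ g) x v w := by
  have h : ∀ j k, pdir (fun q => pdir g q k) x j
      = fderiv ℝ (fderiv ℝ g) x (Pi.single j 1) (Pi.single k 1) := by
    intro j k
    simp only [pdir]
    rw [fderiv_clm_apply (hg.differentiable_fderiv x) (differentiableAt_const _)]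
    simp
  conv_rhs => rw [pi_eq_sum_univ' v, pi_eq_sum_univ' w]
  simp only [h, map_sum, map_smul, sum_apply, smul_apply, smul_eq_mul, Finset.mul_sum]
  rw [Finset.sum_comm]
  exact Finset.sum_congr rfl fun k _ => Finset.sum_congr rfl fun j _ => by ring

theorem sum_sum_sum_pdir_mul_pdir_pdir_mul_mul {m : ℕ} {f : (Fin m → ℝ) → ι → ℝ}
    {g : (Fin n → ℝ) → Fin m → ℝ} {y : Fin m → ℝ} (hf : DifferentiableAt ℝ f y)
    (hg : ContDiff ℝ 2 g) (i : ι) (x v w : Fin n → ℝ) :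
    ∑ k, ∑ j, ∑ l, pdir (fun z => f z i) y k * pdir (fun q => pdir (fun q' => g q' k) q l) x j
        * v j * w l
      = fderiv ℝ f y (fderiv ℝ (fderiv ℝ g) x v w) i := by
  rw [← fderiv_apply_apply hf, ← sum_mul_pdir]
  refine Finset.sum_congr rfl fun k _ => ?_
  rw [← fderiv_fderiv_apply_apply hg, ← sum_sum_pdir_pdir_mul_mul (contDiff_pi.1 hg k),
    mul_comm, Finset.mul_sum]
  refine Finset.sum_congr rfl fun j _ => ?_
  rw [Finset.mul_sum]
  exact Finset.sum_congr rfl fun l _ => by ring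

theorem frameConnection_apply [Fintype ι] {φ ψ : ℝ → (ι → ℝ) → ι → ℝ}
    (hφ : Differentiable ℝ (uncurry φ)) (t : ℝ) (q : ι → ℝ) (i : ι) :
    frameConnection φ ψ t q i = deriv (fun s => φ s (ψ t q) i) t :=
  have h : DifferentiableAt ℝ (fun s => φ s (ψ t q)) t :=
    hφ.comp (differentiable_id.prodMk (differentiable_const _)) t
  ((hasDerivAt_pi.1 h.hasDerivAt) i).deriv.symm

theorem deriv_deriv_comp_apply_eq_pdir_add {φ ψ : ℝ → (Fin n → ℝ) → Fin n → ℝ}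
    (hφ : ContDiff ℝ 2 (uncurry φ)) (hψ : ContDiff ℝ 2 (uncurry ψ))
    (hinv : ∀ t x, ψ t (φ t x) = x) (hinv' : ∀ t q, φ t (ψ t q) = q) {cb c : ℝ → Fin n → ℝ}
    (hcb : ContDiff ℝ 2 cb) (hc : ∀ t, c t = φ t (cb t)) (t : ℝ) (i : Fin n) :
    deriv (deriv c) t i =
      deriv (fun s => frameConnection φ ψ s (c t) i) t
        + (∑ j, deriv c t j * pdir (fun q => frameConnection φ ψ t q i) (c t) j)
        + (∑ j, pdir (fun q => frameConnection φ ψ t q i) (c t) j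
            * (deriv c t j - frameConnection φ ψ t (c t) j))
        - (∑ m, ∑ j, ∑ k, pdir (fun x => φ t x i) (ψ t (c t)) m
            * pdir (fun q => pdir (fun q' => ψ t q' m) q k) (c t) j
            * (deriv c t j - frameConnection φ ψ t (c t) j)
            * (deriv c t k - frameConnection φ ψ t (c t) k))
        + fderiv ℝ (φ t) (cb t) (deriv (deriv cb) t) i := by
  have hΓ : Differentiable ℝ (uncurry (frameConnection φ ψ)) :=
    (contDiff_frameConnection hφ (hψ.of_le one_le_two)).differentiable one_ne_zero
  have hΓt : DifferentiableAt ℝ (fun s => frameConnection φ ψ s (c t)) t :=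
    hΓ.comp (differentiable_id.prodMk (differentiable_const _)) t
  have hΓq : DifferentiableAt ℝ (frameConnection φ ψ t) (c t) :=
    hΓ.comp ((differentiable_const t).prodMk differentiable_id) (c t)
  rw [deriv_deriv_comp_eq_frameConnection_add hφ hψ hinv hinv' hcb hc t,
    ((hasDerivAt_pi.1 hΓt.hasDerivAt) i).deriv, sum_mul_pdir, sum_pdir_mul,
    sum_sum_sum_pdir_mul_pdir_pdir_mul_mul ((hφ.of_uncurry t).differentiable two_ne_zero _)
      (hψ.of_uncurry t), fderiv_apply_apply hΓq, fderiv_apply_apply hΓq, hc t, hinv]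
  -- the sides differ only in writing `deriv c t - Γ t (c t)` as `fun j => deriv c t j - …`
  rfl

end Coordinates

/-- a free motion equation `c̄'' = 0`, rewritten in arbitrary
time-dependent coordinates `q = φ(t, q̄)` (with inverse `q̄ = ψ(t, q)` and the
frame connection `Γ^i(t,q) = ∂_t φ^i(t, ψ(t,q))`), takes the form (m188) whose
right-hand side is the general expression of an inertial force. -/
theorem free_motion_equation_in_arbitrary_coordinates (n : ℕ)
    (φ ψ : ℝ → (Fin n → ℝ) → (Fin n → ℝ))
    (hφ : ContDiff ℝ (⊤ : ℕ∞) fun p : ℝ × (Fin n → ℝ) => φ p.1 p.2)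
    (hψ : ContDiff ℝ (⊤ : ℕ∞) fun p : ℝ × (Fin n → ℝ) => ψ p.1 p.2)
    (hinv : ∀ t x, ψ t (φ t x) = x) (hinv' : ∀ t q, φ t (ψ t q) = q)
    (Γ : ℝ → (Fin n → ℝ) → Fin n → ℝ)
    (hΓ : ∀ t q i, Γ t q i = deriv (fun s => φ s (ψ t q) i) t)
    (cb : ℝ → Fin n → ℝ) (hcb : ContDiff ℝ (⊤ : ℕ∞) cb)
    (c : ℝ → Fin n → ℝ) (hc : ∀ t, c t = φ t (cb t)) :
    (∀ t, deriv (deriv cb) t = 0) ↔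
    (∀ (t : ℝ) (i : Fin n), deriv (deriv c) t i =
      deriv (fun s => Γ s (c t) i) t
        + (∑ j : Fin n, deriv c t j * pdir (fun q => Γ t q i) (c t) j)
        + (∑ j : Fin n, pdir (fun q => Γ t q i) (c t) j * (deriv c t j - Γ t (c t) j))
        - ∑ m : Fin n, ∑ j : Fin n, ∑ k : Fin n,
            pdir (fun x => φ t x i) (ψ t (c t)) m
              * pdir (fun q => pdir (fun q' => ψ t q' m) q k) (c t) j
              * (deriv c t j - Γ t (c t) j) * (deriv c t k - Γ t (c t) k)) := by
  have hφ2 : ContDiff ℝ 2 (uncurry φ) := hφ.of_le (by norm_cast)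
  have hψ2 : ContDiff ℝ 2 (uncurry ψ) := hψ.of_le (by norm_cast)
  have hcb2 : ContDiff ℝ 2 cb := hcb.of_le (by norm_cast)
  obtain rfl : Γ = frameConnection φ ψ := funext fun t => funext fun q => funext fun i =>
    (hΓ t q i).trans (frameConnection_apply (hφ2.differentiable two_ne_zero) t q i).symm
  have hinj : ∀ t, Injective (fderiv ℝ (φ t) (cb t)) := fun t =>
    (leftInverse_fderiv_of_leftInverse (hinv t) ((hψ2.of_uncurry t).differentiable two_ne_zero _)
      ((hφ2.of_uncurry t).differentiable two_ne_zero _)).injective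
  refine forall_congr' fun t => ?_
  rw [← map_eq_zero_iff _ (hinj t), funext_iff]
  refine forall_congr' fun i => ?_
  rw [deriv_deriv_comp_apply_eq_pdir_add hφ2 hψ2 hinv hinv' hcb2 hc t i, add_eq_left,
    Pi.zero_apply]
end
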